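/- Let F be a free group of finite rank d ≥ 2 and let (K_i)_{i ∈ ℕ} be a sequence of characteristic finite-index subgroups of F whose intersection is trivial. Then for every nontrivial automorphism ψ of F there exists an index i such that the automorphism induced by ψ on the abelianization K_i/[K_i,K_i] is nontrivial. -/

import Mathlib

/-!
Suppose `ψ` acts trivially on every `K i / [K i, K i]` but `ψ g ≠ g`. Then `h = ψ g * g⁻¹` lies
outside some `N = K j`, yet commutes with `N` modulo `[N, N]`, so `M = ⟨N, h⟩` satisfies
`[M, M] ≤ [N, N]`. By Nielsen–Schreier `M` is free, and it is nonabelian because `N` has finite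
index. A free basis of `M` has an element `s₀ ∉ N` and another element `s₁`; the map of `M` into
the wreath product `ℤ ≀ (M / N)` sending `s₁` to `(δ₁, s̄₁)` and every other basis element `s` to
`(0, s̄)` sends `N` into the abelian base group, hence kills `[N, N]`, but not `⁅s₁, s₀⁆`.
-/

open Subgroup
open scoped commutatorElement

theorem Subgroup.commutator_closure_le {G : Type*} [Group G] {s : Set G} {H : Subgroup G}
    [H.Normal] (hs : ∀ x ∈ s, ∀ y ∈ s, ⁅x, y⁆ ∈ H) : ⁅closure s, closure s⁆ ≤ H := by
  let π := QuotientGroup.mk' H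
  have hcomm : closure (π '' s) ≤ centralizer (π '' s) := by
    refine closure_le _ |>.mpr ?_
    rintro _ ⟨x, hx, rfl⟩ _ ⟨y, hy, rfl⟩
    have : π ⁅y, x⁆ = 1 := (QuotientGroup.eq_one_iff _).mpr (hs y hy x hx)
    rw [map_commutatorElement] at this
    exact (commutatorElement_eq_one_iff_commute.mp this).eq
  have : ⁅closure s, closure s⁆.map π = ⊥ := by
    rw [map_commutator, MonoidHom.map_closure, commutator_eq_bot_iff_le_centralizer,
      centralizer_closure]
    exact hcomm
  rwa [map_eq_bot_iff, QuotientGroup.ker_mk'] at this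

theorem Subgroup.commutator_le_commutator_subgroupOf {G : Type*} [Group G] {H N : Subgroup G}
    (hNH : N ≤ H) (h : ⁅H, H⁆ ≤ ⁅N, N⁆) :
    _root_.commutator H ≤ ⁅N.subgroupOf H, N.subgroupOf H⁆ := by
  rwa [← map_le_map_iff_of_injective H.subtype_injective, _root_.commutator_def, map_commutator,
    map_commutator, map_subgroupOf_eq_of_le hNH, ← MonoidHom.range_eq_map, range_subtype]

theorem commutatorElement_mem_commutator_of_map_mul_inv_mem {G F : Type*} [Group G]
    [FunLike F G G] [MonoidHomClass F G G] (ψ : F) {N : Subgroup G} [N.Normal]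
    (hψ : ∀ x ∈ N, ψ x * x⁻¹ ∈ ⁅N, N⁆) (g : G) {x : G} (hx : x ∈ N) :
    ⁅x, ψ g * g⁻¹⁆ ∈ ⁅N, N⁆ := by
  have hy : g⁻¹ * x * g ∈ N := by simpa using Normal.conj_mem ‹_› x hx g⁻¹
  have key : ⁅x, ψ g * g⁻¹⁆ =
      (ψ x * x⁻¹)⁻¹ * (ψ g * (ψ (g⁻¹ * x * g) * (g⁻¹ * x * g)⁻¹) * (ψ g)⁻¹) := by
    simp only [commutatorElement_def, map_mul, map_inv]
    group
  rw [key]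
  exact mul_mem (inv_mem (hψ x hx)) (Normal.conj_mem inferInstance _ (hψ _ hy) _)

namespace SemidirectProduct

variable {N G : Type*} [Group N] [Group G] {φ : G →* MulAut N}

theorem apply_left_eq_of_commute_inr {a : N ⋊[φ] G} {g : G} (h : Commute a (inr g)) :
    φ g a.left = a.left := by
  simpa using (congrArg left h.eq).symm

theorem commute_of_right_eq_one {N : Type*} [CommGroup N] {φ : G →* MulAut N}
    {a b : N ⋊[φ] G} (ha : a.right = 1) (hb : b.right = 1) : Commute a b := by
  ext <;> simp [ha, hb, mul_comm]

end SemidirectProduct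

theorem smul_eq_of_mulAutArrow_mulSingle_eq_self {G A M : Type*} [Group G] [MulAction G A]
    [Monoid M] [DecidableEq A] {g : G} {a : A} {m : M} (hm : m ≠ 1)
    (h : mulAutArrow g (Pi.mulSingle a m) = Pi.mulSingle a m) : g • a = a := by
  have h_eval : (Pi.mulSingle a m : A → M) (g⁻¹ • g • a) = (Pi.mulSingle a m : A → M) (g • a) :=
    congrFun h (g • a)
  rw [inv_smul_smul, Pi.mulSingle_eq_same] at h_eval
  by_contra hne
  exact hm (h_eval.trans (Pi.mulSingle_eq_of_ne (M := fun _ ↦ M) hne m))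

open SemidirectProduct

theorem FreeGroup.not_commute_of_pow {α : Type*} {a b : α} (hab : a ≠ b) {m n : ℕ}
    (hm : m ≠ 0) (hn : n ≠ 0) : ¬Commute (of a ^ m) (of b ^ n) := by
  classical
  intro h
  let t : Multiplicative ℤ := .ofAdd 1
  -- in `ℤ ≀ ℤ`, the translation `t ^ n` moves the support of `δ₁ ^ m`
  let f : FreeGroup α →* (Multiplicative ℤ → Multiplicative ℤ) ⋊[mulAutArrow] Multiplicative ℤ :=
    FreeGroup.lift fun i ↦ if i = a then inl (Pi.mulSingle 1 t) else if i = b then inr t else 1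
  have hfa : f (of a) = inl (Pi.mulSingle 1 t) := by simp [f]
  have hfb : f (of b) = inr t := by simp [f, hab.symm]
  have hf := h.map f
  rw [map_pow, map_pow, hfa, hfb, ← map_pow, ← map_pow, ← Pi.mulSingle_pow] at hf
  have hfix := smul_eq_of_mulAutArrow_mulSingle_eq_self (by simpa [t] using hm)
    (apply_left_eq_of_commute_inr hf)
  exact hn (by simpa [t] using hfix)

theorem FreeGroup.not_isMulCommutative_of_finiteIndex {α : Type*} [Nontrivial α]
    (N : Subgroup (FreeGroup α)) [N.FiniteIndex] : ¬IsMulCommutative N := by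
  intro hN
  obtain ⟨a, b, hab⟩ := exists_pair_ne α
  obtain ⟨m, hm, -, ha⟩ := N.exists_pow_mem_of_index_ne_zero N.index_ne_zero_of_finite (of a)
  obtain ⟨n, hn, -, hb⟩ := N.exists_pow_mem_of_index_ne_zero N.index_ne_zero_of_finite (of b)
  refine not_commute_of_pow hab hm.ne' hn.ne' ?_
  exact congrArg Subtype.val (isMulCommutative_iff.mp hN ⟨_, ha⟩ ⟨_, hb⟩)

namespace IsFreeGroup

variable {M : Type*} [Group M] [IsFreeGroup M]

theorem exists_generator_ne (hM : ¬IsMulCommutative M) (s₀ : Generators M) :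
    ∃ s₁, s₁ ≠ s₀ := by
  by_contra! h
  have : Unique (Generators M) := ⟨⟨s₀⟩, h⟩
  refine hM (.of_comm fun a b ↦ (toFreeGroup M).injective ?_)
  rw [map_mul, map_mul]
  exact IsCyclic.commGroup.mul_comm _ _

theorem commutatorElement_of_of_notMem_commutator_ker {Q : Type*} [Group Q] (τ : M →* Q)
    {s₀ s₁ : Generators M} (hs : s₁ ≠ s₀) (hτ : τ (of s₀) ≠ 1) :
    ⁅of s₁, of s₀⁆ ∉ ⁅τ.ker, τ.ker⁆ := by
  classical
  let δ : Q → Multiplicative ℤ := Pi.mulSingle 1 (.ofAdd 1)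
  let ρ : M →* (Q → Multiplicative ℤ) ⋊[mulAutArrow] Q :=
    lift fun s ↦ ⟨if s = s₁ then δ else 1, τ (of s)⟩
  have hright : ∀ z, (ρ z).right = τ z := fun z ↦
    DFunLike.congr_fun (ext_hom (f := rightHom.comp ρ) (g := τ) fun s ↦ by simp [ρ]) z
  have hker : ⁅τ.ker, τ.ker⁆ ≤ ρ.ker := by
    refine commutator_le.mpr fun a ha b hb ↦ ?_
    rw [MonoidHom.mem_ker, map_commutatorElement, commutatorElement_eq_one_iff_commute]
    exact commute_of_right_eq_one ((hright a).trans ha) ((hright b).trans hb)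
  intro hmem
  have hcomm : Commute (ρ (of s₁)) (inr (τ (of s₀))) := by
    have h₀ : ρ (of s₀) = inr (τ (of s₀)) := by ext <;> simp [ρ, hs.symm]
    rw [← h₀, ← commutatorElement_eq_one_iff_commute, ← map_commutatorElement]
    exact hker hmem
  have h₁ : (ρ (of s₁)).left = δ := by simp [ρ]
  have hfix := smul_eq_of_mulAutArrow_mulSingle_eq_self (by simp)
    (h₁ ▸ apply_left_eq_of_commute_inr hcomm)
  exact hτ (by simpa using hfix)

theorem eq_top_of_commutator_le (hM : ¬IsMulCommutative M) {L : Subgroup M} [L.Normal]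
    (hL : commutator M ≤ ⁅L, L⁆) : L = ⊤ := by
  by_contra hL_ne
  obtain ⟨s₀, hs₀⟩ : ∃ s, QuotientGroup.mk' L (of s) ≠ 1 := by
    by_contra! h
    exact hL_ne (QuotientGroup.ker_mk' L ▸ MonoidHom.ker_eq_top_iff.mpr (ext_hom (g := 1) h))
  obtain ⟨s₁, hs⟩ := exists_generator_ne hM s₀
  have := commutatorElement_of_of_notMem_commutator_ker _ hs hs₀
  rw [QuotientGroup.ker_mk'] at this
  exact this (hL (commutator_mem_commutator (mem_top _) (mem_top _)))

theorem mem_of_forall_commutatorElement_mem {G : Type*} [Group G] [IsFreeGroup G]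
    {N : Subgroup G} [N.Normal] (hN : ¬IsMulCommutative N) {h : G}
    (hh : ∀ x ∈ N, ⁅x, h⁆ ∈ ⁅N, N⁆) : h ∈ N := by
  let M := closure ((N : Set G) ∪ {h})
  have hNM : N ≤ M := fun x hx ↦ subset_closure (.inl hx)
  have hMM : ⁅M, M⁆ ≤ ⁅N, N⁆ := by
    refine commutator_closure_le ?_
    rintro x (hx | rfl) y (hy | rfl)
    · exact commutator_mem_commutator hx hy
    · exact hh x hx
    · rw [← commutatorElement_inv]
      exact inv_mem (hh y hy)
    · simp
  have hM : ¬IsMulCommutative M := fun hM ↦ hN <| .of_comm fun a b ↦ Subtype.ext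
    (congrArg Subtype.val (isMulCommutative_iff.mp hM ⟨a, hNM a.2⟩ ⟨b, hNM b.2⟩) :)
  have hMN := eq_top_of_commutator_le hM (commutator_le_commutator_subgroupOf hNM hMM)
  exact subgroupOf_eq_top.mp hMN (subset_closure (.inr rfl))

end IsFreeGroup

/-- If `(K i)` is a sequence of characteristic finite-index subgroups of a
free group of rank `d ≥ 2` with trivial intersection, then every nontrivial
automorphism `ψ` acts nontrivially on some abelianization `K i/[K i, K i]`. -/
theorem nontrivial_aut_acts_nontrivially_on_some_cover (d : ℕ) (hd : 2 ≤ d)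
    (K : ℕ → Subgroup (FreeGroup (Fin d)))
    (hchar : ∀ i, (K i).Characteristic) (hFI : ∀ i, (K i).FiniteIndex)
    (hint : (⨅ i, K i) = ⊥)
    (ψ : FreeGroup (Fin d) ≃* FreeGroup (Fin d)) (hψ : ψ ≠ MulEquiv.refl _) :
    ∃ i, ∃ x ∈ K i, ψ x * x⁻¹ ∉ (⁅K i, K i⁆ : Subgroup (FreeGroup (Fin d))) := by
  by_contra! hψK
  refine hψ (MulEquiv.ext fun g ↦ by_contra fun hg ↦ ?_)
  obtain ⟨j, hj⟩ : ∃ j, ψ g * g⁻¹ ∉ K j := by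
    by_contra! hall
    have hmem : ψ g * g⁻¹ ∈ ⨅ i, K i := mem_iInf.mpr hall
    rw [hint, mem_bot, mul_inv_eq_one] at hmem
    exact hg hmem
  have : Nontrivial (Fin d) := Fin.nontrivial_iff_two_le.mpr hd
  have := hchar j
  have := hFI j
  exact absurd (IsFreeGroup.mem_of_forall_commutatorElement_mem
    (FreeGroup.not_isMulCommutative_of_finiteIndex (K j))
    fun x hx ↦ commutatorElement_mem_commutator_of_map_mul_inv_mem ψ (hψK j) g hx) hj
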